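/- arXiv:1511.07769 — 6 statements merged into one kernel-verified Lean document; each statement's English description precedes it below -/
import Mathlib

section
/- With X = A × B × I and σ as in the construction (σ_{(a,b,i)}(c,d,j) = (c, d+φ₁(a−c), j) if i=j, (c+φ₂(b), d, j) if i≠j), define γ_{(c,d,j)}(a,b,i) = σ^{-1}_{σ_{(a,b,i)}(c,d,j)}(a,b,i). Then γ_{(c,d,j)} is a bijection of X and γ^{-1}_{(c,d,j)} = σ_{(c,d,j)}. -/
/-- The map `σ_{(a,b,i)}` of the main construction:
`σ_{(a,b,i)}(c,d,j) = (c, d + φ₁(a−c), j)` if `i = j`, and `(c + φ₂(b), d, j)` if `i ≠ j`. -/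
def sigmaMap {A B I : Type*} [AddCommGroup A] [AddCommGroup B] [DecidableEq I]
    (φ₁ : A → B) (φ₂ : B →+ A) (p q : A × B × I) : A × B × I :=
  if p.2.2 = q.2.2 then (q.1, q.2.1 + φ₁ (p.1 - q.1), q.2.2)
  else (q.1 + φ₂ p.2.1, q.2.1, q.2.2)

/-- The claimed inverse of `σ_{(a,b,i)}`:
`(c,d,j) ↦ (c, d − φ₁(a−c), j)` if `i = j`, and `(c − φ₂(b), d, j)` if `i ≠ j`. -/
def sigmaInvMap {A B I : Type*} [AddCommGroup A] [AddCommGroup B] [DecidableEq I]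
    (φ₁ : A → B) (φ₂ : B →+ A) (p q : A × B × I) : A × B × I :=
  if p.2.2 = q.2.2 then (q.1, q.2.1 - φ₁ (p.1 - q.1), q.2.2)
  else (q.1 - φ₂ p.2.1, q.2.1, q.2.2)

section

variable {A B I : Type*} [AddCommGroup A] [AddCommGroup B] [DecidableEq I]
  (φ₁ : A → B) (φ₂ : B →+ A)

theorem sigmaMap_sigmaInvMap (q p : A × B × I) :
    sigmaMap φ₁ φ₂ q (sigmaInvMap φ₁ φ₂ q p) = p := by
  obtain ⟨a, b, i⟩ := p
  by_cases h : q.2.2 = i <;> simp [sigmaMap, sigmaInvMap, h]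

theorem sigmaInvMap_sigmaMap (q p : A × B × I) :
    sigmaInvMap φ₁ φ₂ q (sigmaMap φ₁ φ₂ q p) = p := by
  obtain ⟨a, b, i⟩ := p
  by_cases h : q.2.2 = i <;> simp [sigmaMap, sigmaInvMap, h]

/-- `σ⁻¹` only reads the `A`-coordinate of its index when the `I`-coordinates agree and the
`B`- and `I`-coordinates otherwise, and `σ_p q` leaves exactly those coordinates of `q` unchanged;
hence `γ_q = σ⁻¹_q`. -/
theorem sigmaInvMap_sigmaMap_left (q p : A × B × I) :
    sigmaInvMap φ₁ φ₂ (sigmaMap φ₁ φ₂ p q) p = sigmaInvMap φ₁ φ₂ q p := by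
  obtain ⟨c, d, j⟩ := q
  obtain ⟨a, b, i⟩ := p
  by_cases h : i = j
  · subst h
    simp [sigmaMap, sigmaInvMap]
  · simp [sigmaMap, sigmaInvMap, h, Ne.symm h]

end

theorem stmt7_general {A B I : Type*} [AddCommGroup A] [AddCommGroup B] [DecidableEq I]
    (φ₁ : A → B) (φ₂ : B →+ A)
    (γ : A × B × I → A × B × I → A × B × I)
    (hγ : ∀ q p : A × B × I, γ q p = sigmaInvMap φ₁ φ₂ (sigmaMap φ₁ φ₂ p q) p) :
    ∀ q : A × B × I,
      Function.Bijective (γ q) ∧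
      Function.LeftInverse (sigmaMap φ₁ φ₂ q) (γ q) ∧
      Function.RightInverse (sigmaMap φ₁ φ₂ q) (γ q) := by
  intro q
  have hγq : γ q = sigmaInvMap φ₁ φ₂ q := funext fun p => by
    rw [hγ, sigmaInvMap_sigmaMap_left]
  rw [hγq]
  have hL : Function.LeftInverse (sigmaMap φ₁ φ₂ q) (sigmaInvMap φ₁ φ₂ q) :=
    sigmaMap_sigmaInvMap φ₁ φ₂ q
  have hR : Function.RightInverse (sigmaMap φ₁ φ₂ q) (sigmaInvMap φ₁ φ₂ q) :=
    sigmaInvMap_sigmaMap φ₁ φ₂ q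
  exact ⟨⟨hL.injective, hR.surjective⟩, hL, hR⟩

/-- `γ_{(c,d,j)}(a,b,i) = σ⁻¹_{σ_{(a,b,i)}(c,d,j)}(a,b,i)` is bijective with inverse
`σ_{(c,d,j)}`. -/
theorem stmt7 {A B I : Type*} [AddCommGroup A] [AddCommGroup B] [DecidableEq I]
    [Nontrivial A] [Nontrivial B] [Nontrivial I]
    (φ₁ : A → B) (hφ₁ : ∀ a : A, φ₁ (-a) = φ₁ a) (φ₂ : B →+ A)
    (γ : A × B × I → A × B × I → A × B × I)
    (hγ : ∀ q p : A × B × I, γ q p = sigmaInvMap φ₁ φ₂ (sigmaMap φ₁ φ₂ p q) p) :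
    ∀ q : A × B × I,
      Function.Bijective (γ q) ∧
      Function.LeftInverse (sigmaMap φ₁ φ₂ q) (γ q) ∧
      Function.RightInverse (sigmaMap φ₁ φ₂ q) (γ q) :=
  stmt7_general φ₁ φ₂ γ hγ
end

section
/- In the main construction, the strong twisted union identities hold: for distinct i, j ∈ I and all a, c, e ∈ A, b, d, f ∈ B, one has σ_{σ^{-1}_{(a,b,i)}(c,d,j)}(e,f,i) = σ_{(c,d,j)}(e,f,i) and σ^{-1}_{σ_{(e,f,j)}(c,d,i)}(a,b,j) = σ^{-1}_{(c,d,i)}(a,b,j). -/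
/-! When the labels differ, `σ_p` and `σ⁻¹_p` only translate the `A`-coordinate, by `±φ₂` of the
`B`-coordinate of `p`; so the inner map of each identity leaves unchanged the part of the outer
index that the outer map reads. -/

section

variable {A B I : Type*} [AddCommGroup A] [AddCommGroup B] [DecidableEq I]
  (φ₁ : A → B) (φ₂ : B →+ A) {p q : A × B × I}

theorem sigmaMap_of_ne (h : p.2.2 ≠ q.2.2) :
    sigmaMap φ₁ φ₂ p q = (q.1 + φ₂ p.2.1, q.2) :=
  if_neg h

theorem sigmaInvMap_of_ne (h : p.2.2 ≠ q.2.2) :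
    sigmaInvMap φ₁ φ₂ p q = (q.1 - φ₂ p.2.1, q.2) :=
  if_neg h

end

theorem stmt12_general {A B I : Type*} [AddCommGroup A] [AddCommGroup B] [DecidableEq I]
    (φ₁ : A → B) (φ₂ : B →+ A)
    (i j : I) (hij : i ≠ j) :
    ∀ a c e : A, ∀ b d f : B,
      sigmaMap φ₁ φ₂ (sigmaInvMap φ₁ φ₂ (a, b, i) (c, d, j)) (e, f, i) =
        sigmaMap φ₁ φ₂ (c, d, j) (e, f, i) ∧
      sigmaInvMap φ₁ φ₂ (sigmaMap φ₁ φ₂ (e, f, j) (c, d, i)) (a, b, j) =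
        sigmaInvMap φ₁ φ₂ (c, d, i) (a, b, j) := by
  intro a c e b d f
  constructor
  · rw [sigmaInvMap_of_ne φ₁ φ₂ hij, sigmaMap_of_ne φ₁ φ₂ hij.symm, sigmaMap_of_ne φ₁ φ₂ hij.symm]
  · rw [sigmaMap_of_ne φ₁ φ₂ hij.symm, sigmaInvMap_of_ne φ₁ φ₂ hij, sigmaInvMap_of_ne φ₁ φ₂ hij]

/-- The strong twisted union identities for distinct `i, j ∈ I`. -/
theorem stmt12 {A B I : Type*} [AddCommGroup A] [AddCommGroup B] [DecidableEq I]
    [Nontrivial A] [Nontrivial B] [Nontrivial I]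
    (φ₁ : A → B) (hφ₁ : ∀ a : A, φ₁ (-a) = φ₁ a) (φ₂ : B →+ A)
    (i j : I) (hij : i ≠ j) :
    ∀ a c e : A, ∀ b d f : B,
      sigmaMap φ₁ φ₂ (sigmaInvMap φ₁ φ₂ (a, b, i) (c, d, j)) (e, f, i) =
        sigmaMap φ₁ φ₂ (c, d, j) (e, f, i) ∧
      sigmaInvMap φ₁ φ₂ (sigmaMap φ₁ φ₂ (e, f, j) (c, d, i)) (a, b, j) =
        sigmaInvMap φ₁ φ₂ (c, d, i) (a, b, j) :=
  stmt12_general φ₁ φ₂ i j hij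
end

section
/- In the main construction, if φ₁(A) generates B as a group and φ₂ is surjective, then the orbits of X(A,B,I) under the group G generated by { σ_{(a,b,i)} : a ∈ A, b ∈ B, i ∈ I } are exactly the sets X_i = A × B × {i}, i ∈ I. -/
/-!
Every `σ` preserves the third coordinate, so each orbit lies in one `X_j`. Conversely, inside
`X_j` the map `σ_{(0,b,i)}` with `i ≠ j` translates the `A`-coordinate by `φ₂ b`, and
`σ_{(a+c,0,j)}` sends `(c,d,j)` to `(c, d + φ₁ a, j)`; by surjectivity of `φ₂` and since `φ₁(A)`
generates `B`, these moves connect any two points of `X_j`.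
-/

open MulAction

theorem Equiv.Perm.apply_eq_of_mem_closure {α β : Type*} {f : α → β} {S : Set (Equiv.Perm α)}
    (hS : ∀ g ∈ S, ∀ x, f (g x) = f x) {g : Equiv.Perm α} (hg : g ∈ Subgroup.closure S)
    (x : α) : f (g x) = f x := by
  induction hg using Subgroup.closure_induction generalizing x with
  | mem g hg => exact hS g hg x
  | one => rfl
  | mul g h _ _ ihg ihh => exact (ihg (h x)).trans (ihh x)
  | inv g _ ih => simpa using (ih (g⁻¹ x)).symm

theorem Subgroup.exists_mem_apply_eq_iff_mem_orbit {α : Type*} (H : Subgroup (Equiv.Perm α))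
    (p q : α) : (∃ g ∈ H, g p = q) ↔ q ∈ orbit H p := by
  simp [mem_orbit_iff, subgroup_smul_def, Equiv.Perm.smul_def]

section Sigma

variable {A B I : Type*} [AddCommGroup A] [AddCommGroup B] [DecidableEq I]
  (φ₁ : A → B) (φ₂ : B →+ A)

def sigmaPerm (p : A × B × I) : Equiv.Perm (A × B × I) where
  toFun := sigmaMap φ₁ φ₂ p
  invFun := sigmaInvMap φ₁ φ₂ p
  left_inv q := by
    unfold sigmaMap sigmaInvMap
    split_ifs <;> simp
  right_inv q := by
    unfold sigmaMap sigmaInvMap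
    split_ifs <;> simp

theorem setOf_eq_sigmaMap_eq_range_sigmaPerm :
    {g : Equiv.Perm (A × B × I) | ∃ p, ∀ q, g q = sigmaMap φ₁ φ₂ p q}
      = Set.range (sigmaPerm φ₁ φ₂) := by
  ext g
  exact exists_congr fun p => ⟨fun h => (Equiv.ext h).symm, fun h q => by rw [← h]; rfl⟩

@[simp]
theorem sigmaPerm_apply_snd_snd (p q : A × B × I) : (sigmaPerm φ₁ φ₂ p q).2.2 = q.2.2 := by
  change (sigmaMap φ₁ φ₂ p q).2.2 = q.2.2
  unfold sigmaMap
  split_ifs <;> rfl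

theorem sigmaPerm_apply_of_ne {i j : I} (hij : i ≠ j) (a c : A) (b d : B) :
    sigmaPerm φ₁ φ₂ (a, b, i) (c, d, j) = (c + φ₂ b, d, j) :=
  if_neg hij

theorem sigmaPerm_add_apply (a c : A) (b d : B) (j : I) :
    sigmaPerm φ₁ φ₂ (a + c, b, j) (c, d, j) = (c, d + φ₁ a, j) := by
  change sigmaMap φ₁ φ₂ _ _ = _
  simp [sigmaMap]

local notation "G" =>
  (Subgroup.closure (Set.range (sigmaPerm φ₁ φ₂)) : Subgroup (Equiv.Perm (A × B × I)))

theorem sigmaPerm_mem_closure (p : A × B × I) : sigmaPerm φ₁ φ₂ p ∈ G :=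
  Subgroup.subset_closure ⟨p, rfl⟩

theorem orbit_closure_sigmaPerm_subset (p : A × B × I) :
    orbit G p ⊆ {x | x.2.2 = p.2.2} := by
  rintro _ ⟨⟨g, hg⟩, rfl⟩
  exact Equiv.Perm.apply_eq_of_mem_closure (f := fun x => x.2.2)
    (by rintro _ ⟨r, rfl⟩; simp) hg p

theorem add_fst_mem_orbit_closure_sigmaPerm [Nontrivial I] (c : A) (b d : B) (j : I) :
    (c + φ₂ b, d, j) ∈ orbit G (c, d, j) := by
  obtain ⟨i, hi⟩ := exists_ne j
  exact ⟨⟨_, sigmaPerm_mem_closure φ₁ φ₂ (0, b, i)⟩, sigmaPerm_apply_of_ne φ₁ φ₂ hi 0 c b d⟩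

theorem add_snd_mem_orbit_closure_sigmaPerm (c : A) {t : B}
    (ht : t ∈ AddSubgroup.closure (Set.range φ₁)) (d : B) (j : I) :
    (c, d + t, j) ∈ orbit G (c, d, j) := by
  induction ht using AddSubgroup.closure_induction generalizing d with
  | mem t ht =>
    obtain ⟨a, rfl⟩ := ht
    exact ⟨⟨_, sigmaPerm_mem_closure φ₁ φ₂ (a + c, 0, j)⟩, sigmaPerm_add_apply φ₁ φ₂ a c 0 d j⟩
  | zero => simp
  | add s t _ _ ihs iht =>
    rw [← add_assoc, ← orbit_eq_iff.mpr (ihs d)]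
    exact iht (d + s)
  | neg t _ ih => simpa using mem_orbit_symm.mp (ih (d + -t))

theorem mem_orbit_closure_sigmaPerm_iff [Nontrivial I]
    (hgen : AddSubgroup.closure (Set.range φ₁) = ⊤) (hsur : Function.Surjective φ₂)
    (p q : A × B × I) : q ∈ orbit G p ↔ p.2.2 = q.2.2 := by
  refine ⟨fun h => (orbit_closure_sigmaPerm_subset φ₁ φ₂ p h).symm, ?_⟩
  obtain ⟨c, d, j⟩ := p
  obtain ⟨c', d', j'⟩ := q
  rintro rfl
  obtain ⟨b, hb⟩ := hsur (c' - c)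
  have h₁ : (c', d, j) ∈ orbit G (c, d, j) := by
    simpa [hb] using add_fst_mem_orbit_closure_sigmaPerm φ₁ φ₂ c b d j
  have h₂ := add_snd_mem_orbit_closure_sigmaPerm φ₁ φ₂ c' (t := d' - d) (by simp [hgen]) d j
  rw [add_sub_cancel] at h₂
  rwa [← orbit_eq_iff.mpr h₁]

end Sigma

theorem stmt13_general {A B I : Type*} [AddCommGroup A] [AddCommGroup B] [DecidableEq I]
    [Nontrivial I]
    (φ₁ : A → B) (φ₂ : B →+ A)
    (hgen : AddSubgroup.closure (Set.range φ₁) = (⊤ : AddSubgroup B))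
    (hsur : Function.Surjective φ₂)
    (S : Set (Equiv.Perm (A × B × I)))
    (hS : S = {g : Equiv.Perm (A × B × I) | ∃ p : A × B × I,
      ∀ q : A × B × I, g q = sigmaMap φ₁ φ₂ p q}) :
    ∀ p q : A × B × I,
      (∃ g ∈ Subgroup.closure S, g p = q) ↔ p.2.2 = q.2.2 := by
  intro p q
  rw [hS, setOf_eq_sigmaMap_eq_range_sigmaPerm, Subgroup.exists_mem_apply_eq_iff_mem_orbit]
  exact mem_orbit_closure_sigmaPerm_iff φ₁ φ₂ hgen hsur p q

/-- If `φ₁(A)` generates `B` and `φ₂` is surjective, then the orbits of `X(A,B,I)` under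
the permutation group generated by the `σ`'s are exactly the sets `X_i = A × B × {i}`:
two points lie in the same orbit iff they have the same third coordinate. -/
theorem stmt13 {A B I : Type*} [AddCommGroup A] [AddCommGroup B] [DecidableEq I]
    [Nontrivial A] [Nontrivial B] [Nontrivial I]
    (φ₁ : A → B) (hφ₁ : ∀ a : A, φ₁ (-a) = φ₁ a) (φ₂ : B →+ A)
    (hgen : AddSubgroup.closure (Set.range φ₁) = (⊤ : AddSubgroup B))
    (hsur : Function.Surjective φ₂)
    (S : Set (Equiv.Perm (A × B × I)))
    (hS : S = {g : Equiv.Perm (A × B × I) | ∃ p : A × B × I,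
      ∀ q : A × B × I, g q = sigmaMap φ₁ φ₂ p q}) :
    ∀ p q : A × B × I,
      (∃ g ∈ Subgroup.closure S, g p = q) ↔ p.2.2 = q.2.2 :=
  stmt13_general φ₁ φ₂ hgen hsur S hS
end

section
/- Let (X,r) be a finite solution of the YBE with r(x,y) = (σ_x(y), σ^{-1}_{σ_x(y)}(x)). If (X,r) is irretractable (σ_x = σ_y implies x = y), then the natural left brace structure on the permutation group G(X,r) = ⟨σ_x : x ∈ X⟩ has trivial socle. -/
/-! For `g` in the socle, `λ_g` is the identity, so `σ_{g(x)} = λ_g(σ_x) = σ_x`;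
irretractability then gives `g(x) = x` for every `x`, i.e. `g = 1`. -/

theorem add_add_neg_cancel_left_of_comm {α : Type*} (add : α → α → α) (neg : α → α) (zero : α)
    (hcomm : ∀ a b, add a b = add b a) (hassoc : ∀ a b c, add (add a b) c = add a (add b c))
    (hzero : ∀ a, add a zero = a) (hneg : ∀ a, add a (neg a) = zero) (a b : α) :
    add (add a b) (neg a) = b := by
  rw [hcomm a b, hassoc, hneg, hzero]

theorem stmt14_general {X : Type*} (σ : X → Equiv.Perm X)
    (hirr : ∀ x y : X, σ x = σ y → x = y)
    (G : Subgroup (Equiv.Perm X)) (hG : G = Subgroup.closure (Set.range σ))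
    (add : G → G → G) (neg : G → G)
    (hadd_comm : ∀ g h : G, add g h = add h g)
    (hadd_assoc : ∀ g h k : G, add (add g h) k = add g (add h k))
    (hadd_zero : ∀ g : G, add g 1 = g)
    (hadd_neg : ∀ g : G, add g (neg g) = 1)
    (hlam : ∀ (g : G) (x : X) (hx : σ x ∈ G),
      ((add (g * ⟨σ x, hx⟩) (neg g) : G) : Equiv.Perm X) = σ ((g : Equiv.Perm X) x)) :
    ∀ g : G, (∀ h : G, g * h = add g h) → g = 1 := by
  intro g hsoc
  have hmem (x : X) : σ x ∈ G := hG ▸ Subgroup.subset_closure ⟨x, rfl⟩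
  have hlam_trivial (x : X) : σ ((g : Equiv.Perm X) x) = σ x := by
    rw [← hlam g x (hmem x), hsoc, add_add_neg_cancel_left_of_comm add neg 1 hadd_comm
      hadd_assoc hadd_zero hadd_neg]
  ext x
  exact hirr _ _ (hlam_trivial x)

/-- If `(X,r)` is a finite irretractable solution of the YBE, with
`r(x,y) = (σ_x(y), σ⁻¹_{σ_x(y)}(x))`, then the natural left brace structure on the
permutation group `G = ⟨σ_x : x ∈ X⟩` (any brace structure whose multiplication is
composition of permutations and whose `λ`-maps satisfy `λ_g(σ_x) = σ_{g(x)}`) has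
trivial socle. -/
theorem stmt14 {X : Type*} [Finite X] (σ : X → Equiv.Perm X)
    (hsol : ∀ x y : X, σ x * σ ((σ x)⁻¹ y) = σ y * σ ((σ y)⁻¹ x))
    (hirr : ∀ x y : X, σ x = σ y → x = y)
    (G : Subgroup (Equiv.Perm X)) (hG : G = Subgroup.closure (Set.range σ))
    (add : G → G → G) (neg : G → G)
    (hadd_comm : ∀ g h : G, add g h = add h g)
    (hadd_assoc : ∀ g h k : G, add (add g h) k = add g (add h k))
    (hadd_zero : ∀ g : G, add g 1 = g)
    (hadd_neg : ∀ g : G, add g (neg g) = 1)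
    (hbrace : ∀ a b c : G, add (a * add b c) a = add (a * b) (a * c))
    (hlam : ∀ (g : G) (x : X) (hx : σ x ∈ G),
      ((add (g * ⟨σ x, hx⟩) (neg g) : G) : Equiv.Perm X) = σ ((g : Equiv.Perm X) x)) :
    ∀ g : G, (∀ h : G, g * h = add g h) → g = 1 :=
  stmt14_general σ hirr G hG add neg hadd_comm hadd_assoc hadd_zero hadd_neg hlam
end

section
/- Let (X,r) be a solution of the YBE, {X_i}_{i∈I} the orbits of X under the permutation group, and G_i the multiplicative subgroup of the structure group G(X,r) generated by X_i. Then G_i equals the additive subgroup of G(X,r) generated by X_i; in particular G_i is a subbrace of G(X,r) invariant under all λ_g, g ∈ G(X,r), and G_iG_j = G_jG_i for all i, j ∈ I. -/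
/-!
Write `λ_g(a) = g·a - g`. Each `λ_g` is additive, `g ↦ λ_g` is multiplicative, and the two
operations are linked by `a·b = a + λ_a(b)`, `a + b = a·λ_{a⁻¹}(b)`, `a⁻¹ = -λ_{a⁻¹}(a)` and
`-a = (λ_{(-a)⁻¹}(a))⁻¹`. An orbit `Y` is `λ`-invariant, hence so is the additive subgroup it
generates, which the first two identities then show to be a multiplicative subgroup. Conversely,
by induction on the additive closure, all `λ`-images of its elements lie in the multiplicative
subgroup generated by `Y`. Finally `a·b = a + λ_a(b) = λ_a(b)·λ_{λ_a(b)⁻¹}(a)` gives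
`G_Y G_Z = G_Z G_Y`.
-/

/-- A left brace: an abelian group `(B,+)` and a group `(B,·)` such that
`a·(b+c) + a = a·b + a·c`. -/
class LeftBrace (B : Type*) extends AddCommGroup B, Group B where
  mul_add_distrib : ∀ a b c : B, a * (b + c) + a = a * b + a * c

namespace LeftBrace

variable {G : Type*} [LeftBrace G]

lemma one_eq_zero : (1 : G) = 0 := by
  simpa using mul_add_distrib (1 : G) 0 0

def lam (g : G) : G →+ G :=
  AddMonoidHom.mk' (fun a => g * a - g) fun a b => by
    have h := mul_add_distrib g a b
    rw [← sub_eq_iff_eq_add.mpr h]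
    abel

lemma lam_apply (g a : G) : lam g a = g * a - g := rfl

lemma mul_eq_add_lam (g a : G) : g * a = g + lam g a := by
  rw [lam_apply]; abel

lemma lam_one (a : G) : lam 1 a = a := by
  rw [lam_apply, one_mul, one_eq_zero, sub_zero]

lemma lam_mul (g h a : G) : lam (g * h) a = lam g (lam h a) := by
  rw [lam_apply h, sub_eq_add_neg, map_add, map_neg]
  simp only [lam_apply, mul_assoc]
  abel

lemma add_eq_mul_lam (a b : G) : a + b = a * lam a⁻¹ b := by
  rw [mul_eq_add_lam, ← lam_mul, mul_inv_cancel, lam_one]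

lemma inv_eq_neg_lam (a : G) : a⁻¹ = -lam a⁻¹ a := by
  have h := mul_eq_add_lam a⁻¹ a
  rw [inv_mul_cancel, one_eq_zero] at h
  exact eq_neg_of_add_eq_zero_left h.symm

lemma neg_eq_inv_lam (a : G) : -a = (lam (-a)⁻¹ a)⁻¹ := by
  have h := inv_eq_neg_lam (-a)
  rw [map_neg, neg_neg] at h
  rw [← h, inv_inv]

lemma mul_eq_lam_mul_lam (a b : G) : a * b = lam a b * lam (lam a b)⁻¹ a := by
  rw [← add_eq_mul_lam, mul_eq_add_lam, add_comm]

def IsLamInvariant (S : Set G) : Prop := ∀ g, ∀ a ∈ S, lam g a ∈ S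

lemma isLamInvariant_orbit (x : G) : IsLamInvariant {y : G | ∃ g : G, g * x - g = y} := by
  rintro g _ ⟨h, rfl⟩
  exact ⟨g * h, lam_mul g h x⟩

lemma IsLamInvariant.addClosure {Y : Set G} (hY : IsLamInvariant Y) :
    IsLamInvariant (AddSubgroup.closure Y : Set G) := by
  intro g a ha
  have hmap : (AddSubgroup.closure Y).map (lam g) ≤ AddSubgroup.closure Y := by
    rw [AddMonoidHom.map_closure, AddSubgroup.closure_le]
    rintro _ ⟨y, hy, rfl⟩
    exact AddSubgroup.subset_closure (hY g y hy)
  exact hmap ⟨a, ha, rfl⟩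

def _root_.AddSubgroup.toSubgroupOfIsLamInvariant (A : AddSubgroup G)
    (hA : IsLamInvariant (A : Set G)) : Subgroup G where
  carrier := A
  one_mem' := by
    rw [SetLike.mem_coe, one_eq_zero]
    exact A.zero_mem
  mul_mem' {a b} ha hb := by
    rw [SetLike.mem_coe, mul_eq_add_lam]
    exact A.add_mem ha (hA a b hb)
  inv_mem' {a} ha := by
    rw [SetLike.mem_coe, inv_eq_neg_lam]
    exact A.neg_mem (hA a⁻¹ a ha)

lemma lam_mem_closure_of_mem_addClosure {Y : Set G} (hY : IsLamInvariant Y) {a : G}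
    (ha : a ∈ AddSubgroup.closure Y) (g : G) : lam g a ∈ Subgroup.closure Y := by
  induction ha using AddSubgroup.closure_induction generalizing g with
  | mem y hy => exact Subgroup.subset_closure (hY g y hy)
  | zero =>
    rw [map_zero, ← one_eq_zero]
    exact Subgroup.one_mem _
  | add a b _ _ iha ihb =>
    rw [map_add, add_eq_mul_lam, ← lam_mul]
    exact mul_mem (iha g) (ihb _)
  | neg a _ iha =>
    rw [map_neg, neg_eq_inv_lam, ← lam_mul]
    exact inv_mem (iha _)

theorem coe_closure_eq_addClosure {Y : Set G} (hY : IsLamInvariant Y) :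
    (Subgroup.closure Y : Set G) = AddSubgroup.closure Y := by
  apply Set.Subset.antisymm
  · exact (Subgroup.closure_le ((AddSubgroup.closure Y).toSubgroupOfIsLamInvariant
      hY.addClosure)).mpr AddSubgroup.subset_closure
  · intro a ha
    have h := lam_mem_closure_of_mem_addClosure hY ha 1
    rwa [lam_one] at h

lemma IsLamInvariant.closure {Y : Set G} (hY : IsLamInvariant Y) :
    IsLamInvariant (Subgroup.closure Y : Set G) := by
  rw [coe_closure_eq_addClosure hY]
  exact hY.addClosure

lemma IsLamInvariant.exists_mul_eq_mul_swap {S T : Set G} (hS : IsLamInvariant S)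
    (hT : IsLamInvariant T) {a b : G} (ha : a ∈ S) (hb : b ∈ T) :
    ∃ b' ∈ T, ∃ a' ∈ S, a * b = b' * a' :=
  ⟨lam a b, hT a b hb, lam (lam a b)⁻¹ a, hS _ a ha, mul_eq_lam_mul_lam a b⟩

end LeftBrace

open LeftBrace

theorem stmt16_general {G : Type*} [LeftBrace G] (X : Set G)
    (Y Z : Set G)
    (hY : ∃ x ∈ X, Y = {y : G | ∃ g : G, g * x - g = y})
    (hZ : ∃ x ∈ X, Z = {y : G | ∃ g : G, g * x - g = y}) :
    ((Subgroup.closure Y : Set G) = (AddSubgroup.closure Y : Set G)) ∧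
    (∀ g : G, ∀ h ∈ Subgroup.closure Y, g * h - g ∈ Subgroup.closure Y) ∧
    (∀ a ∈ Subgroup.closure Y, ∀ b ∈ Subgroup.closure Z,
      ∃ b' ∈ Subgroup.closure Z, ∃ a' ∈ Subgroup.closure Y, a * b = b' * a') := by
  obtain ⟨x, -, rfl⟩ := hY
  obtain ⟨z, -, rfl⟩ := hZ
  have hGY := (isLamInvariant_orbit x).closure
  have hGZ := (isLamInvariant_orbit z).closure
  exact ⟨coe_closure_eq_addClosure (isLamInvariant_orbit x), hGY,
    fun a ha b hb => hGY.exists_mul_eq_mul_swap hGZ ha hb⟩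

/-- Setting: `G` is the structure group of a solution `(X,r)` viewed as a left brace
whose additive group is free abelian with basis `X`, with `λ_g(X) ⊆ X`
(`λ_g(h) = g·h − g`).  If `Y` and `Z` are orbits of `X` under the permutation group
(the orbit of `x₀ ∈ X` is `{λ_g(x₀) : g ∈ G}`), then the multiplicative subgroup
generated by `Y` equals the additive subgroup generated by `Y` (so it is a subbrace),
it is invariant under all `λ_g`, and `G_Y G_Z = G_Z G_Y`. -/
theorem stmt16 {G : Type*} [LeftBrace G] (X : Set G)
    (hgen : Subgroup.closure X = (⊤ : Subgroup G))
    (hbasis : ∀ g : G, ∃! f : X →₀ ℤ, g = f.sum fun x n => n • (x : G))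
    (hlamX : ∀ g : G, ∀ x ∈ X, g * x - g ∈ X)
    (Y Z : Set G)
    (hY : ∃ x ∈ X, Y = {y : G | ∃ g : G, g * x - g = y})
    (hZ : ∃ x ∈ X, Z = {y : G | ∃ g : G, g * x - g = y}) :
    ((Subgroup.closure Y : Set G) = (AddSubgroup.closure Y : Set G)) ∧
    (∀ g : G, ∀ h ∈ Subgroup.closure Y, g * h - g ∈ Subgroup.closure Y) ∧
    (∀ a ∈ Subgroup.closure Y, ∀ b ∈ Subgroup.closure Z,
      ∃ b' ∈ Subgroup.closure Z, ∃ a' ∈ Subgroup.closure Y, a * b = b' * a') :=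
  stmt16_general X Y Z hY hZ
end

section
/- Let A = B = ℤ/kℤ with k > 1, φ₂ = id, φ₁(0) = 0 and φ₁(x) = 1 for x ≠ 0, and let X = A × B × I with |I| ≥ 2. Then for all a, b ∈ A, i ∈ I, the permutation σ_{(a,b,i)} of X satisfies σ_{(a,b,i)}^k = id, and σ_{(a,b,i)} and σ_{(c,d,i)} commute for all a,b,c,d ∈ A. -/
/-!
On the slice `j = i` the map `σ_{(a,b,i)}` fixes the `A`-coordinate and translates the
`B`-coordinate by `φ₁(a - c)`, which depends only on that fixed coordinate; off the slice it
translates the `A`-coordinate by `φ₂(b)`. So `σ^n` translates by `n • φ₁(a - c)`, resp.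
`n • φ₂(b)`, which vanishes for `n = k` in `ℤ/kℤ`; and two maps with the same index `i`
translate the same coordinate, so they commute.
-/

section

variable {A B I : Type*} [AddCommGroup A] [AddCommGroup B] [DecidableEq I]

theorem sigmaMap_iterate (φ₁ : A → B) (φ₂ : B →+ A) (p q : A × B × I) (n : ℕ) :
    (sigmaMap φ₁ φ₂ p)^[n] q =
      if p.2.2 = q.2.2 then (q.1, q.2.1 + n • φ₁ (p.1 - q.1), q.2.2)
      else (q.1 + n • φ₂ p.2.1, q.2.1, q.2.2) := by
  induction n with
  | zero => simp
  | succ n ih =>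
    rw [Function.iterate_succ_apply', ih]
    split_ifs with h <;> simp [sigmaMap, h, succ_nsmul, add_assoc]

theorem sigmaMap_iterate_eq_id {n : ℕ} (hA : ∀ x : A, n • x = 0) (hB : ∀ y : B, n • y = 0)
    (φ₁ : A → B) (φ₂ : B →+ A) (p : A × B × I) : (sigmaMap φ₁ φ₂ p)^[n] = id := by
  funext q
  rw [sigmaMap_iterate]
  split_ifs <;> simp [hA, hB]

theorem sigmaMap_commute (φ₁ : A → B) (φ₂ : B →+ A) {p p' : A × B × I} (h : p.2.2 = p'.2.2) :
    Function.Commute (sigmaMap φ₁ φ₂ p) (sigmaMap φ₁ φ₂ p') := by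
  intro q
  by_cases hq : p.2.2 = q.2.2 <;> simp [sigmaMap, hq, ← h, add_right_comm]

end

theorem stmt19_general {I : Type*} [DecidableEq I] (k : ℕ)
    (φ₁ : ZMod k → ZMod k)
    (φ₂ : ZMod k →+ ZMod k) :
    ∀ (a b : ZMod k) (i : I),
      (sigmaMap φ₁ φ₂ (a, b, i))^[k] = id ∧
      (∀ c d : ZMod k,
        sigmaMap φ₁ φ₂ (a, b, i) ∘ sigmaMap φ₁ φ₂ (c, d, i) =
          sigmaMap φ₁ φ₂ (c, d, i) ∘ sigmaMap φ₁ φ₂ (a, b, i)) := by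
  intro a b i
  have hk : ∀ x : ZMod k, k • x = 0 := ZModModule.char_nsmul_eq_zero k
  exact ⟨sigmaMap_iterate_eq_id hk hk φ₁ φ₂ _,
    fun c d => (sigmaMap_commute φ₁ φ₂ (p := (a, b, i)) (p' := (c, d, i)) rfl).comp_eq⟩

/-- For `A = B = ℤ/kℤ`, `k > 1`, `φ₂ = id`, `φ₁(0) = 0` and `φ₁(x) = 1` for `x ≠ 0`:
each `σ_{(a,b,i)}` satisfies `σ^k = id`, and `σ_{(a,b,i)}` and `σ_{(c,d,i)}` commute. -/
theorem stmt19 {I : Type*} [DecidableEq I] [Nontrivial I] (k : ℕ) (hk : 1 < k)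
    (φ₁ : ZMod k → ZMod k) (hφ₁ : ∀ x : ZMod k, φ₁ x = if x = 0 then 0 else 1)
    (φ₂ : ZMod k →+ ZMod k) (hφ₂ : φ₂ = AddMonoidHom.id (ZMod k)) :
    ∀ (a b : ZMod k) (i : I),
      (sigmaMap φ₁ φ₂ (a, b, i))^[k] = id ∧
      (∀ c d : ZMod k,
        sigmaMap φ₁ φ₂ (a, b, i) ∘ sigmaMap φ₁ φ₂ (c, d, i) =
          sigmaMap φ₁ φ₂ (c, d, i) ∘ sigmaMap φ₁ φ₂ (a, b, i)) :=
  stmt19_general k φ₁ φ₂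
end
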